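/- arXiv:2605.14900 — 2 statements merged into one kernel-verified Lean document; each statement's English description precedes it below -/
import Mathlib

section
/- With the definitions above, Σ_{t ∈ T : s(t) > 0} c_t² / s(t) ≤ cost(G,Q)², where cost(G,Q) = Σ_{q ∈ Q} |T_q|. -/
/-- Σ_{t : s(t)>0} c_t²/s(t) ≤ cost(G,Q)². -/
theorem sum_sq_cost_div_sensitivity_le
    {T Q : Type*} [Fintype T] [Fintype Q] [DecidableEq T] [Nonempty T] [Nonempty Q]
    (Tq : Q → Finset T) (h : ∀ q, (Tq q).Nonempty)
    (s c : T → ℝ)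
    (hs : ∀ t, s t = ∑ q : Q, ((Tq q).card : ℝ)⁻¹ * (if t ∈ Tq q then 1 else 0))
    (hc : ∀ t, c t = ∑ q : Q, (if t ∈ Tq q then (1 : ℝ) else 0)) :
    ∑ t ∈ Finset.univ.filter (fun t : T => 0 < s t), (c t) ^ 2 / s t
      ≤ (∑ q : Q, ((Tq q).card : ℝ)) ^ 2 := by
  set C : ℝ := ∑ q : Q, ((Tq q).card : ℝ) with hCdef
  have hcard_le : ∀ q : Q, ((Tq q).card : ℝ) ≤ C := by
    intro q
    exact Finset.single_le_sum (f := fun q => ((Tq q).card : ℝ))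
      (fun q _ => by positivity) (Finset.mem_univ q)
  have hcnn : ∀ t, 0 ≤ c t := by
    intro t
    rw [hc]
    exact Finset.sum_nonneg fun q _ => by positivity
  have hle : ∀ t, c t ≤ C * s t := by
    intro t
    rw [hc, hs, Finset.mul_sum]
    refine Finset.sum_le_sum fun q _ => ?_
    by_cases ht : t ∈ Tq q
    · simp only [ht, if_pos, mul_one]
      have hpos : (0 : ℝ) < ((Tq q).card : ℝ) := by
        exact_mod_cast Finset.card_pos.mpr (h q)
      rw [show C * ((Tq q).card : ℝ)⁻¹ = C / ((Tq q).card : ℝ) by ring,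
        le_div_iff₀ hpos, one_mul]
      exact hcard_le q
    · simp [ht]
  have hsum_c : ∑ t : T, c t = C := by
    simp only [hc]
    rw [Finset.sum_comm]
    congr 1
    funext q
    simp [Finset.sum_ite_mem, Finset.univ_inter]
  have step1 : ∀ t ∈ Finset.univ.filter (fun t : T => 0 < s t),
      (c t) ^ 2 / s t ≤ C * c t := by
    intro t htm
    have hst : 0 < s t := (Finset.mem_filter.mp htm).2
    rw [div_le_iff₀ hst]
    have : c t * c t ≤ c t * (C * s t) :=
      mul_le_mul_of_nonneg_left (hle t) (hcnn t)
    nlinarith [this]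
  calc ∑ t ∈ Finset.univ.filter (fun t : T => 0 < s t), (c t) ^ 2 / s t
      ≤ ∑ t ∈ Finset.univ.filter (fun t : T => 0 < s t), C * c t :=
        Finset.sum_le_sum step1
    _ ≤ ∑ t : T, C * c t := by
        refine Finset.sum_le_sum_of_subset_of_nonneg (Finset.filter_subset _ _) ?_
        intro t _ _
        have hCnn : 0 ≤ C := le_trans (by positivity : (0:ℝ) ≤ ((Tq (Classical.arbitrary Q)).card : ℝ)) (hcard_le _)
        exact mul_nonneg hCnn (hcnn t)
    _ = C * ∑ t : T, c t := by rw [Finset.mul_sum]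
    _ = C ^ 2 := by rw [hsum_c]; ring
end

section
/- Combining the sensitivity lower bound with the second-moment formula: under sensitivity-proportional sampling with s(t) = Σ_q (1/|T_q|)𝟙[t∈T_q] (so S = |Q|), a single importance sample r = c_X/p(X) satisfies Var[r] ≤ |Q| · cost(G,Q)², where cost(G,Q) = Σ_q |T_q|. -/
/-- Variance bound for a single importance sample under sensitivity-proportional
sampling: Var[r] ≤ |Q| · cost(G,Q)². -/
theorem importance_sampling_variance_le
    {T Q : Type*} [Fintype T] [Fintype Q] [DecidableEq T] [Nonempty T] [Nonempty Q]
    (Tq : Q → Finset T) (h : ∀ q, (Tq q).Nonempty)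
    (s c : T → ℝ)
    (hs : ∀ t, s t = ∑ q : Q, ((Tq q).card : ℝ)⁻¹ * (if t ∈ Tq q then 1 else 0))
    (hc : ∀ t, c t = ∑ q : Q, (if t ∈ Tq q then (1 : ℝ) else 0)) :
    (∑ t : T, (s t / (Fintype.card Q : ℝ)) *
        (if s t = 0 then 0 else c t * (Fintype.card Q : ℝ) / s t) ^ 2)
      - (∑ t : T, (s t / (Fintype.card Q : ℝ)) *
          (if s t = 0 then 0 else c t * (Fintype.card Q : ℝ) / s t)) ^ 2
    ≤ (Fintype.card Q : ℝ) * (∑ q : Q, ((Tq q).card : ℝ)) ^ 2 := by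
  set n : ℝ := (Fintype.card Q : ℝ) with hn
  set C : ℝ := ∑ q : Q, ((Tq q).card : ℝ) with hCdef
  have hnpos : 0 < n := by
    rw [hn]; exact_mod_cast Fintype.card_pos
  have hCge : ∀ q : Q, ((Tq q).card : ℝ) ≤ C :=
    fun q => Finset.single_le_sum (f := fun q : Q => ((Tq q).card : ℝ)) (fun q _ => by positivity) (Finset.mem_univ q)
  have hCpos : 0 < C := by
    obtain ⟨q⟩ := ‹Nonempty Q›
    have : (0:ℝ) < ((Tq q).card : ℝ) := by exact_mod_cast (h q).card_pos
    exact lt_of_lt_of_le this (hCge q)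
  have hsnn : ∀ t, 0 ≤ s t := by
    intro t; rw [hs]
    apply Finset.sum_nonneg
    intro q _; positivity
  have hcnn : ∀ t, 0 ≤ c t := by
    intro t; rw [hc]
    apply Finset.sum_nonneg
    intro q _; positivity
  have hcC : ∀ t, c t ≤ C * s t := by
    intro t
    rw [hc, hs, Finset.mul_sum]
    apply Finset.sum_le_sum
    intro q _
    by_cases ht : t ∈ Tq q
    · simp only [ht, if_true, mul_one]
      have hcard : (0:ℝ) < ((Tq q).card : ℝ) := by exact_mod_cast (h q).card_pos
      rw [← div_eq_mul_inv, le_div_iff₀ hcard, one_mul]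
      exact hCge q
    · simp [ht]
  have hsumc : ∑ t : T, c t = C := by
    rw [hCdef]
    simp only [hc]
    rw [Finset.sum_comm]
    congr 1
    funext q
    simp [Finset.sum_ite_mem, Finset.univ_inter]
  have h2 : (∑ t : T, (s t / n) * (if s t = 0 then 0 else c t * n / s t) ^ 2)
      ≤ n * C ^ 2 := by
    have step : (∑ t : T, (s t / n) * (if s t = 0 then 0 else c t * n / s t) ^ 2)
        ≤ ∑ t : T, n * C * c t := by
      apply Finset.sum_le_sum
      intro t _
      by_cases hst : s t = 0
      · simp only [hst, if_true]
        have : (0:ℝ) ≤ n * C * c t := by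
          have := hcnn t
          positivity
        simpa using this
      · simp only [hst, if_false]
        have hstpos : 0 < s t := lt_of_le_of_ne (hsnn t) (Ne.symm hst)
        have hct := hcnn t
        have key : c t * c t ≤ C * s t * c t :=
          mul_le_mul_of_nonneg_right (hcC t) hct
        have heq : (s t / n) * (c t * n / s t) ^ 2 = c t ^ 2 * n / s t := by
          field_simp
        rw [heq, div_le_iff₀ hstpos]
        nlinarith [mul_le_mul_of_nonneg_left key hnpos.le]
    calc _ ≤ ∑ t : T, n * C * c t := step
      _ = n * C * ∑ t : T, c t := (Finset.mul_sum _ _ _).symm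
      _ = n * C ^ 2 := by rw [hsumc]; ring
  have hsq : (0:ℝ) ≤ (∑ t : T, (s t / n) * (if s t = 0 then 0 else c t * n / s t)) ^ 2 :=
    sq_nonneg _
  linarith
end
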